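/- There is a universal constant C ≥ 1 such that the following holds. Let n ≥ 1, let v ∈ ℝ^n and p ∈ ℝ^n with ‖p‖_∞ ≤ 1/2, and let α > 0 and 1 ≤ a ≤ n be such that α ≤ min{|v_1|, …, |v_a|}. Then the Lévy concentration function of the biased linear form X_{v,p} satisfies Q(α, X_{v,p}) ≤ C/√a. -/

import Mathlib

open MeasureTheory

/-- The biased product measure `μ_p` on `{-1,1}^n ⊂ ℝ^n`: coordinates are independent,
with `Pr[x i = 1] = (1 + p i)/2` and `Pr[x i = -1] = (1 - p i)/2`. -/
noncomputable def cubeMeasure {n : ℕ} (p : Fin n → ℝ) : Measure (Fin n → ℝ) :=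
  Measure.pi fun i =>
    ENNReal.ofReal ((1 + p i) / 2) • Measure.dirac (1 : ℝ) +
      ENNReal.ofReal ((1 - p i) / 2) • Measure.dirac (-1 : ℝ)

/-- The Lévy concentration function `Q(α, X_{v,p}) = sup_t Pr_{x ~ μ_p}[|⟨v,x⟩ - t| < α]`
of the biased linear form `X_{v,p} = ⟨v, x⟩`, `x ~ μ_p`. -/
noncomputable def levyQLinForm {n : ℕ} (v p : Fin n → ℝ) (α : ℝ) : ENNReal :=
  ⨆ t : ℝ, cubeMeasure p {x | |(∑ i, v i * x i) - t| < α}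

/-!
Write each coin with `|p i| ≤ 1/2` as a mixture: with probability `q i = 1 - |p i| ≥ 1/2` it is a
fair sign, otherwise it equals the sign of `p i`. Conditionally on the random set `S` of fair
coordinates, Erdős's Sperner argument bounds the probability of any window of width `2α` by
`C(m, ⌊m/2⌋) / 2^m ≤ 1/√(m+1)`, where `m = #(S ∩ B)` counts the fair coordinates among the
first `a`, those in `B` where `α ≤ |v i|`. By Jensen, `E[1/√(m+1)] ≤ √E[1/(m+1)]`, and
`E[1/(m+1)] = ∫₀¹ E[x^m] dx ≤ ∫₀¹ ((1+x)/2)^a dx ≤ 2/(a+1)`, whence `Q ≤ 2/√a`.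
-/

open Finset

theorem Nat.centralBinom_sq_mul_le (k : ℕ) : centralBinom k ^ 2 * (3 * k + 1) ≤ 16 ^ k := by
  induction k with
  | zero => simp
  | succ k ih =>
    refine Nat.le_of_mul_le_mul_left ?_ (show 0 < (k + 1) ^ 2 by positivity)
    -- `3k + 1` rather than `2k + 1` is what makes this polynomial inequality hold
    have hpoly : (2 * k + 1) ^ 2 * (3 * k + 4) ≤ 4 * (k + 1) ^ 2 * (3 * k + 1) := by
      ring_nf; omega
    calc (k + 1) ^ 2 * (centralBinom (k + 1) ^ 2 * (3 * (k + 1) + 1))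
        = (2 * (2 * k + 1)) ^ 2 * centralBinom k ^ 2 * (3 * k + 4) := by
          rw [← mul_pow, ← mul_assoc, ← mul_pow, succ_mul_centralBinom_succ]; ring
      _ ≤ 16 * (k + 1) ^ 2 * (centralBinom k ^ 2 * (3 * k + 1)) := by
          nlinarith [Nat.zero_le (centralBinom k ^ 2)]
      _ ≤ 16 * (k + 1) ^ 2 * 16 ^ k := Nat.mul_le_mul_left _ ih
      _ = (k + 1) ^ 2 * 16 ^ (k + 1) := by ring

theorem Nat.choose_half_sq_mul_le (m : ℕ) : m.choose (m / 2) ^ 2 * (m + 1) ≤ 4 ^ m := by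
  obtain ⟨k, rfl | rfl⟩ := Nat.even_or_odd' m
  · have := centralBinom_sq_mul_le k
    rw [show 2 * k / 2 = k by omega, ← centralBinom_eq_two_mul_choose, pow_mul]
    norm_num
    nlinarith
  · have hsplit : centralBinom (k + 1) = 2 * (2 * k + 1).choose k := by
      rw [centralBinom_eq_two_mul_choose, show 2 * (k + 1) = 2 * k + 1 + 1 by ring,
        choose_succ_succ', choose_symm_half]; ring
    have := centralBinom_sq_mul_le (k + 1)
    rw [hsplit, pow_succ 16] at this
    rw [show (2 * k + 1) / 2 = k by omega, pow_succ 4, pow_mul]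
    norm_num at this ⊢
    nlinarith

theorem Nat.choose_half_div_two_pow_le (m : ℕ) :
    (m.choose (m / 2) : ℝ) / 2 ^ m ≤ √((m + 1 : ℝ)⁻¹) := by
  have h : ((m.choose (m / 2) ^ 2 * (m + 1) : ℕ) : ℝ) ≤ ((4 ^ m : ℕ) : ℝ) :=
    Nat.cast_le.2 (choose_half_sq_mul_le m)
  push_cast at h
  apply Real.le_sqrt_of_sq_le
  rw [div_pow, ← pow_mul, mul_comm m 2, pow_mul, div_le_iff₀ (by positivity)]
  field_simp
  norm_num
  linarith

theorem IsAntichain.card_le_choose_half_of_subset {ι : Type*}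
    {𝒜 : Finset (Finset ι)} {S : Finset ι} (h𝒜 : IsAntichain (· ⊆ ·) (𝒜 : Set (Finset ι)))
    (hS : ∀ T ∈ 𝒜, T ⊆ S) : #𝒜 ≤ (#S).choose (#S / 2) := by
  classical
  let φ : Finset S ↪o Finset ι := mapEmbedding (.subtype (· ∈ S))
  have hrange : ∀ T ∈ 𝒜, T ∈ Set.range φ := fun T hT =>
    ⟨T.subtype (· ∈ S), by simpa [φ] using subtype_map_of_mem (hS T hT)⟩
  have hcard : #(𝒜.preimage φ φ.injective.injOn) = #𝒜 := by
    rw [card_preimage, filter_true_of_mem hrange]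
  rw [← hcard, ← Fintype.card_coe S]
  apply IsAntichain.sperner
  rw [coe_preimage]
  exact h𝒜.preimage_embedding φ

namespace LittlewoodOfford

theorem integral_one_add_div_two_pow_le (N : ℕ) :
    ∫ x in (0 : ℝ)..1, ((1 + x) / 2) ^ N ≤ 2 / (N + 1) := by
  simp only [div_pow, intervalIntegral.integral_div,
    intervalIntegral.integral_comp_add_left (· ^ N), integral_pow]
  norm_num
  rw [div_div, div_le_div_iff₀ (by positivity) (by positivity), pow_succ]
  nlinarith [pow_pos (two_pos (α := ℝ)) N]

theorem mul_ite_sub_mul_ite {x : ℝ} {b b' : Bool}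
    (h : b = decide (0 ≤ x) → b' = decide (0 ≤ x)) :
    x * (if b' then 1 else -1) - x * (if b then 1 else -1) =
      if b' = decide (0 ≤ x) ∧ b ≠ decide (0 ≤ x) then 2 * |x| else 0 := by
  rcases le_or_gt 0 x with hx | hx <;> cases b <;> cases b' <;>
    simp_all [abs_of_nonneg, abs_of_neg] <;> ring

variable {ι : Type*} [Fintype ι]

def signVec (ε : ι → Bool) (i : ι) : ℝ := if ε i then 1 else -1

noncomputable def coinWeight (q : ℝ) (b : Bool) : ℝ := if b then (1 + q) / 2 else (1 - q) / 2

noncomputable def cubeWeight (p : ι → ℝ) (ε : ι → Bool) : ℝ := ∏ i, coinWeight (p i) (ε i)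

theorem coinWeight_nonneg {q : ℝ} (hq : |q| ≤ 1) (b : Bool) : 0 ≤ coinWeight q b := by
  have := abs_le.1 hq
  cases b <;> simp [coinWeight] <;> linarith

theorem cubeWeight_nonneg {p : ι → ℝ} (hp : ∀ i, |p i| ≤ 1) (ε : ι → Bool) :
    0 ≤ cubeWeight p ε :=
  prod_nonneg fun i _ => coinWeight_nonneg (hp i) _

theorem coinWeight_eq_mixture (q : ℝ) (b : Bool) :
    coinWeight q b = (1 - |q|) / 2 + |q| * if b = decide (0 ≤ q) then 1 else 0 := by
  rcases le_or_gt 0 q with hq | hq <;> cases b <;>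
    simp [coinWeight, hq, abs_of_nonneg, abs_of_neg, not_le.2] <;> ring

variable [DecidableEq ι]

noncomputable def window (v : ι → ℝ) (t α : ℝ) : Finset (ι → Bool) :=
  {ε | |∑ i, v i * signVec ε i - t| < α}

noncomputable def alignedCoords (v : ι → ℝ) (S : Finset ι) (ε : ι → Bool) : Finset ι :=
  {i ∈ S | ε i = decide (0 ≤ v i)}

theorem sum_mul_signVec_sub_eq {v : ι → ℝ} {S : Finset ι} {ε ε' : ι → Bool}
    (hoff : ∀ i ∉ S, ε i = ε' i) (hsub : alignedCoords v S ε ⊆ alignedCoords v S ε') :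
    ∑ i, v i * signVec ε' i - ∑ i, v i * signVec ε i =
      ∑ i ∈ alignedCoords v S ε' \ alignedCoords v S ε, 2 * |v i| := by
  rw [← sum_sub_distrib, ← univ_inter (_ \ _), ← sum_ite_mem]
  refine sum_congr rfl fun i _ => ?_
  by_cases hi : i ∈ S
  · have := @hsub i
    simp only [alignedCoords, mem_filter, hi, true_and, mem_sdiff] at this ⊢
    exact mul_ite_sub_mul_ite this
  · simp [alignedCoords, hi, signVec, hoff i hi]

/-- Erdős's form of the Littlewood–Offord lemma. -/
theorem card_window_filter_le_choose (v : ι → ℝ) (t α : ℝ) (σ : ι → Bool) {S : Finset ι}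
    (hS : ∀ i ∈ S, α ≤ |v i|) :
    #{ε ∈ window v t α | ∀ i ∉ S, ε i = σ i} ≤ (#S).choose (#S / 2) := by
  set F := {ε ∈ window v t α | ∀ i ∉ S, ε i = σ i}
  have hF : ∀ ε ∈ F, |∑ i, v i * signVec ε i - t| < α ∧ ∀ i ∉ S, ε i = σ i := by
    simp [F, window]
  have hinj : Set.InjOn (alignedCoords v S) F := by
    intro ε hε ε' hε' h
    funext i
    by_cases hi : i ∈ S
    · have := congrArg (i ∈ ·) h
      simp only [alignedCoords, mem_filter, hi, true_and, eq_iff_iff] at this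
      generalize decide (0 ≤ v i) = d at this
      revert this
      cases ε i <;> cases ε' i <;> cases d <;> simp
    · rw [(hF ε hε).2 i hi, (hF ε' hε').2 i hi]
  -- two nested members of the image would give two sums in the window at distance `≥ 2α`
  have hanti : IsAntichain (· ⊆ ·) (F.image (alignedCoords v S) : Set (Finset ι)) := by
    rw [coe_image]
    rintro _ ⟨ε, hε, rfl⟩ _ ⟨ε', hε', rfl⟩ hne hsub
    obtain ⟨i, hi⟩ := sdiff_nonempty.2 fun h => hne (hsub.antisymm h)
    have hiS : i ∈ S := (mem_filter.1 (mem_sdiff.1 hi).1).1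
    have hgap := sum_mul_signVec_sub_eq
      (fun j hj => ((hF ε hε).2 j hj).trans ((hF ε' hε').2 j hj).symm) hsub
    have : 2 * α ≤ ∑ j ∈ alignedCoords v S ε' \ alignedCoords v S ε, 2 * |v j| :=
      (mul_le_mul_of_nonneg_left (hS i hiS) zero_le_two).trans
        (single_le_sum (f := fun j => 2 * |v j|) (fun j _ => by positivity) hi)
    linarith [abs_lt.1 (hF ε hε).1, abs_lt.1 (hF ε' hε').1]
  rw [← card_image_of_injOn hinj]
  exact hanti.card_le_choose_half_of_subset (by simp [alignedCoords])

theorem card_window_filter_le (v : ι → ℝ) (t α : ℝ) (σ : ι → Bool) {B : Finset ι}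
    (hB : ∀ i ∈ B, α ≤ |v i|) (S : Finset ι) :
    #{ε ∈ window v t α | ∀ i ∉ S, ε i = σ i} ≤
      2 ^ #(S \ B) * (#(S ∩ B)).choose (#(S ∩ B) / 2) := by
  -- fix the coordinates of `S \ B` in each of the `2 ^ #(S \ B)` possible ways
  let σ' (U : Finset ι) (i : ι) : Bool := if i ∈ S \ B then decide (i ∈ U) else σ i
  calc #{ε ∈ window v t α | ∀ i ∉ S, ε i = σ i}
      ≤ #((S \ B).powerset.biUnion fun U =>
          {ε ∈ window v t α | ∀ i ∉ S ∩ B, ε i = σ' U i}) := by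
        refine card_le_card fun ε hε => ?_
        simp only [mem_filter, mem_biUnion, mem_powerset] at hε ⊢
        refine ⟨{i ∈ S \ B | ε i}, filter_subset _ _, hε.1, fun i hi => ?_⟩
        by_cases hiSB : i ∈ S \ B
        · simp only [σ', if_pos hiSB, mem_filter, hiSB, true_and, Bool.decide_eq_true]
        · simp only [σ', hiSB, if_false]
          exact hε.2 i (by simp_all)
    _ ≤ ∑ U ∈ (S \ B).powerset, #{ε ∈ window v t α | ∀ i ∉ S ∩ B, ε i = σ' U i} :=
        card_biUnion_le
    _ ≤ ∑ U ∈ (S \ B).powerset, (#(S ∩ B)).choose (#(S ∩ B) / 2) :=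
        sum_le_sum fun U _ =>
          card_window_filter_le_choose v t α (σ' U) fun i hi => hB i (mem_inter.1 hi).2
    _ = 2 ^ #(S \ B) * (#(S ∩ B)).choose (#(S ∩ B) / 2) := by
        rw [sum_const, card_powerset, smul_eq_mul]

def subsetWeight (q : ι → ℝ) (S : Finset ι) : ℝ := (∏ i ∈ S, q i) * ∏ i ∈ Sᶜ, (1 - q i)

theorem subsetWeight_nonneg {q : ι → ℝ} (hq : ∀ i, 0 ≤ q i ∧ q i ≤ 1) (S : Finset ι) :
    0 ≤ subsetWeight q S :=
  mul_nonneg (prod_nonneg fun i _ => (hq i).1) (prod_nonneg fun i _ => sub_nonneg.2 (hq i).2)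

theorem sum_subsetWeight (q : ι → ℝ) : ∑ S, subsetWeight q S = 1 := by
  simp [subsetWeight, ← Fintype.prod_add]

theorem sum_subsetWeight_mul_pow (q : ι → ℝ) (B : Finset ι) (x : ℝ) :
    ∑ S, subsetWeight q S * x ^ #(S ∩ B) = ∏ i ∈ B, (q i * x + (1 - q i)) := by
  calc ∑ S, subsetWeight q S * x ^ #(S ∩ B)
      = ∏ i, (q i * (if i ∈ B then x else 1) + (1 - q i)) := by
        rw [Fintype.prod_add]
        refine sum_congr rfl fun S _ => ?_
        rw [subsetWeight, prod_mul_distrib, prod_ite_mem, prod_const]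
        ring
    _ = ∏ i ∈ B, (q i * x + (1 - q i)) := by
        rw [← prod_subset (subset_univ B) fun i _ hi => by simp [hi]]
        exact prod_congr rfl fun i hi => by simp [hi]

theorem sum_subsetWeight_mul_inv_le {q : ι → ℝ} (hq : ∀ i, 1 / 2 ≤ q i ∧ q i ≤ 1)
    (B : Finset ι) : ∑ S, subsetWeight q S * (#(S ∩ B) + 1 : ℝ)⁻¹ ≤ 2 / (#B + 1) := by
  have hpgf : ∀ x ∈ Set.Icc (0 : ℝ) 1,
      ∑ S, subsetWeight q S * x ^ #(S ∩ B) ≤ ((1 + x) / 2) ^ #B := by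
    rintro x ⟨hx0, hx1⟩
    rw [sum_subsetWeight_mul_pow, ← prod_const]
    refine prod_le_prod (fun i _ => ?_) fun i _ => ?_ <;> nlinarith [hq i]
  calc ∑ S, subsetWeight q S * (#(S ∩ B) + 1 : ℝ)⁻¹
      = ∫ x in (0 : ℝ)..1, ∑ S, subsetWeight q S * x ^ #(S ∩ B) := by
        rw [intervalIntegral.integral_finsetSum fun S _ =>
          (by fun_prop : Continuous _).intervalIntegrable _ _]
        simp [integral_pow]
    _ ≤ ∫ x in (0 : ℝ)..1, ((1 + x) / 2) ^ #B :=
        intervalIntegral.integral_mono_on zero_le_one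
          ((by fun_prop : Continuous _).intervalIntegrable _ _)
          ((by fun_prop : Continuous _).intervalIntegrable _ _) hpgf
    _ ≤ 2 / (#B + 1) := integral_one_add_div_two_pow_le _

theorem sum_subsetWeight_mul_choose_le {q : ι → ℝ} (hq : ∀ i, 1 / 2 ≤ q i ∧ q i ≤ 1)
    {B : Finset ι} (hB : 0 < #B) :
    ∑ S, subsetWeight q S * ((#(S ∩ B)).choose (#(S ∩ B) / 2) / 2 ^ #(S ∩ B)) ≤
      2 / √(#B : ℝ) := by
  have hw : ∀ S, 0 ≤ subsetWeight q S :=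
    subsetWeight_nonneg fun i => ⟨by linarith [hq i], (hq i).2⟩
  have hB' : (0 : ℝ) < #B := by exact_mod_cast hB
  calc ∑ S, subsetWeight q S * ((#(S ∩ B)).choose (#(S ∩ B) / 2) / 2 ^ #(S ∩ B))
      ≤ ∑ S, subsetWeight q S * √((#(S ∩ B) + 1 : ℝ)⁻¹) :=
        sum_le_sum fun S _ => mul_le_mul_of_nonneg_left (Nat.choose_half_div_two_pow_le _) (hw S)
    _ ≤ √(∑ S, subsetWeight q S * (#(S ∩ B) + 1 : ℝ)⁻¹) := by
        simpa only [smul_eq_mul] using Real.strictConcaveOn_sqrt.concaveOn.le_map_sum (t := univ)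
          (p := fun S => (#(S ∩ B) + 1 : ℝ)⁻¹) (fun S _ => hw S) (sum_subsetWeight q)
          fun S _ => Set.mem_Ici.2 (by positivity)
    _ ≤ √(2 / (#B + 1)) := Real.sqrt_le_sqrt (sum_subsetWeight_mul_inv_le hq B)
    _ ≤ 2 / √(#B : ℝ) := by
        rw [le_div_iff₀ (Real.sqrt_pos.2 hB'), ← Real.sqrt_mul (by positivity),
          Real.sqrt_le_left zero_le_two, div_mul_eq_mul_div, div_le_iff₀ (by positivity)]
        nlinarith

theorem sum_cubeWeight_eq_sum_subsetWeight (p : ι → ℝ) (E : Finset (ι → Bool)) :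
    ∑ ε ∈ E, cubeWeight p ε = ∑ S, subsetWeight (fun i => 1 - |p i|) S *
      (#{ε ∈ E | ∀ i ∉ S, ε i = decide (0 ≤ p i)} / 2 ^ #S) := by
  simp only [cubeWeight, coinWeight_eq_mixture, Fintype.prod_add]
  rw [sum_comm]
  refine sum_congr rfl fun S _ => ?_
  simp only [prod_mul_distrib, prod_boole, ← mul_sum, sum_boole, subsetWeight, sub_sub_cancel,
    prod_div_distrib, prod_const, mem_compl]
  ring

theorem sum_cubeWeight_window_le {p : ι → ℝ} (hp : ∀ i, |p i| ≤ 1 / 2) {v : ι → ℝ} {t α : ℝ}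
    {B : Finset ι} (hB : ∀ i ∈ B, α ≤ |v i|) (hB0 : 0 < #B) :
    ∑ ε ∈ window v t α, cubeWeight p ε ≤ 2 / √(#B : ℝ) := by
  have hq : ∀ i, 1 / 2 ≤ 1 - |p i| ∧ 1 - |p i| ≤ 1 :=
    fun i => ⟨by linarith [hp i], by linarith [abs_nonneg (p i)]⟩
  rw [sum_cubeWeight_eq_sum_subsetWeight]
  refine (sum_le_sum fun S _ => mul_le_mul_of_nonneg_left ?_ ?_).trans
    (sum_subsetWeight_mul_choose_le hq hB0)
  · have hcount : (#{ε ∈ window v t α | ∀ i ∉ S, ε i = decide (0 ≤ p i)} : ℝ) ≤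
        2 ^ #(S \ B) * (#(S ∩ B)).choose (#(S ∩ B) / 2) := by
      exact_mod_cast card_window_filter_le v t α _ hB S
    rw [div_le_div_iff₀ (by positivity) (by positivity), ← card_inter_add_card_sdiff S B, pow_add]
    nlinarith [pow_pos (two_pos (α := ℝ)) #(S ∩ B)]
  · exact subsetWeight_nonneg (fun i => ⟨by linarith [hq i], (hq i).2⟩) S

theorem cubeMeasure_eq_sum_dirac {n : ℕ} {p : Fin n → ℝ} (hp : ∀ i, |p i| ≤ 1) :
    cubeMeasure p = ∑ ε, ENNReal.ofReal (cubeWeight p ε) • Measure.dirac (signVec ε) := by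
  have hcoin : ∀ i, ENNReal.ofReal ((1 + p i) / 2) • Measure.dirac (1 : ℝ) +
      ENNReal.ofReal ((1 - p i) / 2) • Measure.dirac (-1 : ℝ) =
      ∑ b, ENNReal.ofReal (coinWeight (p i) b) • Measure.dirac (if b then (1 : ℝ) else -1) := by
    simp [coinWeight, add_comm]
  simp only [cubeMeasure, hcoin]
  have (i : Fin n) : IsFiniteMeasure
      (∑ b, ENNReal.ofReal (coinWeight (p i) b) • Measure.dirac (if b then (1 : ℝ) else -1)) :=
    ⟨by simp⟩
  refine Measure.pi_eq fun s hs => ?_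
  simp only [Measure.coe_finsetSum, Finset.sum_apply, Measure.smul_apply, smul_eq_mul,
    Measure.dirac_apply' _ (MeasurableSet.univ_pi hs), Measure.dirac_apply' _ (hs _),
    Fintype.prod_sum]
  refine sum_congr rfl fun ε _ => ?_
  rw [prod_mul_distrib, cubeWeight,
    ENNReal.ofReal_prod_of_nonneg fun i _ => coinWeight_nonneg (hp i) _]
  congr 1
  classical
  simp [Set.indicator_apply, prod_boole, signVec]

theorem cubeMeasure_window {n : ℕ} {p : Fin n → ℝ} (hp : ∀ i, |p i| ≤ 1) (v : Fin n → ℝ)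
    (t α : ℝ) :
    cubeMeasure p {x | |∑ i, v i * x i - t| < α} =
      ENNReal.ofReal (∑ ε ∈ window v t α, cubeWeight p ε) := by
  rw [cubeMeasure_eq_sum_dirac hp, Measure.coe_finsetSum, Finset.sum_apply, window, sum_filter,
    ENNReal.ofReal_sum_of_nonneg fun ε _ => by split_ifs <;> simp [cubeWeight_nonneg hp]]
  refine sum_congr rfl fun ε _ => ?_
  split_ifs with h <;> simp [Measure.dirac_apply, h]

end LittlewoodOfford

/-- Lemma 2.11, Littlewood–Offord: there is a universal constant `C ≥ 1`
such that if `‖p‖_∞ ≤ 1/2` and `α ≤ min {|v_1|, …, |v_a|}`, then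
`Q(α, X_{v,p}) ≤ C / √a`. -/
theorem stmt_5 :
    ∃ C : ℝ, 1 ≤ C ∧
      ∀ (n : ℕ), 1 ≤ n →
        ∀ (v p : Fin n → ℝ), (∀ i, |p i| ≤ 1 / 2) →
          ∀ (α : ℝ), 0 < α →
            ∀ (a : ℕ), 1 ≤ a → a ≤ n →
              (∀ i : Fin n, (i : ℕ) < a → α ≤ |v i|) →
              levyQLinForm v p α ≤ ENNReal.ofReal (C / Real.sqrt a) := by
  refine ⟨2, one_le_two, fun n _ v p hp α _ a ha han hva => iSup_le fun t => ?_⟩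
  have hB : #{i : Fin n | (i : ℕ) < a} = a := by rw [Fin.card_filter_val_lt, min_eq_right han]
  rw [LittlewoodOfford.cubeMeasure_window (fun i => (hp i).trans (by norm_num)), ← hB]
  exact ENNReal.ofReal_le_ofReal <| LittlewoodOfford.sum_cubeWeight_window_le
    (B := {i : Fin n | (i : ℕ) < a}) hp (fun i hi => hva i (by simpa using hi)) (by omega)
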